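/- Let h ∈ ℝ and let B be a sesquilinear form on ℂ[z] satisfying B(l_i p, q) = B(p, l_{−i} q) for all i ∈ {−1, 0, 1} and all p, q ∈ ℂ[z]. Then B(z^n, z^m) = 0 for n ≠ m and B(z^n, z^n) = n!·(2h)(2h+1)⋯(2h+n−1)·B(1,1); in particular, such a contravariant form on the Verma module V_h is unique up to a scalar multiple. -/

import Mathlib

open Polynomial

noncomputable section

/-- Multiplication by `X` (the operator `l₋₁`). -/
def mulX : Module.End ℂ (Polynomial ℂ) := LinearMap.mulLeft ℂ (X : Polynomial ℂ)

/-- The differentiation operator `d/dz` (the operator `D`). -/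
def der : Module.End ℂ (Polynomial ℂ) := Polynomial.derivative

/-- The generators `l₋₁, l₀, l₁` of `sl(2,ℂ)` acting on the Verma module `V_h ≅ ℂ[z]`. -/
def lgen (h : ℝ) (i : ℤ) : Module.End ℂ (Polynomial ℂ) :=
  if i = -1 then mulX
  else if i = 0 then mulX * der + (h : ℂ) • 1
  else if i = 1 then mulX * der * der + ((2 * h : ℝ) : ℂ) • der
  else 0

/-- The operator `F`, `F zⁿ = zⁿ⁺¹/(n+2h)`. -/
def Fop (h : ℝ) : Module.End ℂ (Polynomial ℂ) :=
  (Polynomial.basisMonomials ℂ).constr ℂ fun n =>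
    (((n : ℂ) + 2 * (h : ℂ))⁻¹) • (X : Polynomial ℂ) ^ (n + 1)

/-- The `q_R`-conformal symmetries `L_k` (`k ∈ ℤ`) acting on `ℂ[z]`. -/
def Lop (h : ℝ) (k : ℤ) : Module.End ℂ (Polynomial ℂ) :=
  (Polynomial.basisMonomials ℂ).constr ℂ fun n =>
    if 0 ≤ k then
      ((((n : ℂ) - (k : ℂ)) + ((k : ℂ) + 1) * (h : ℂ)) * (n.descFactorial k.toNat : ℂ)) •
        (X : Polynomial ℂ) ^ (n - k.toNat)
    else
      (((n : ℂ) + (((-k).toNat : ℂ) + 1) * (h : ℂ)) /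
          ∏ j ∈ Finset.range (-k).toNat, ((n : ℂ) + 2 * (h : ℂ) + (j : ℂ))) •
        (X : Polynomial ℂ) ^ (n + (-k).toNat)

/-- The deviations `A_{n,m} = [L_n, L_m] − (n−m)·L_{n+m}`. -/
def dev (h : ℝ) (n m : ℤ) : Module.End ℂ (Polynomial ℂ) :=
  Lop h n * Lop h m - Lop h m * Lop h n - ((n - m : ℤ) : ℂ) • Lop h (n + m)

/-- The diagonal eigenvalue `a_k(j)` of the deviation `A_{k,−k}` on the monomial `z^j`. -/
def adiag (h : ℝ) (k : ℤ) (j : ℕ) : ℂ := ((dev h k (-k)) ((X : Polynomial ℂ) ^ j)).coeff j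

/-- The weight `⟨zⁿ, zⁿ⟩ = n!·(2h)(2h+1)⋯(2h+n−1)`. -/
def wgt (h : ℝ) (n : ℕ) : ℝ := (n.factorial : ℝ) * ∏ j ∈ Finset.range n, (2 * h + (j : ℝ))

/-- The inner product of the unitarizable Verma module (`h > 0`), conjugate-linear in
the first argument. -/
def ip (h : ℝ) (p q : Polynomial ℂ) : ℂ :=
  ∑ n ∈ p.support, (starRingEnd ℂ) (p.coeff n) * q.coeff n * ((wgt h n : ℝ) : ℂ)

/-- The associated norm. -/
def nrm (h : ℝ) (p : Polynomial ℂ) : ℝ := Real.sqrt (ip h p p).re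

/-- The fundamental form `α_{i,j} = ((6h²−6h+1)/6)·(j³−j)·δ_{i+j,0}`. -/
def alphaF (h : ℝ) (i j : ℤ) : ℝ :=
  if i + j = 0 then ((6 * h ^ 2 - 6 * h + 1) / 6) * ((j : ℝ) ^ 3 - (j : ℝ)) else 0

/-- The inverse fundamental form `α^{k,−k} = −1/α_{k,−k}` (for `|k| ≥ 2`). -/
def alphaInv (h : ℝ) (k : ℤ) : ℝ := -1 / alphaF h k (-k)

/-
A contravariant form makes `l₀` symmetric, and the monomials `zⁿ` are eigenvectors of `l₀`
with the distinct real eigenvalues `n + h`, so they are pairwise orthogonal. On the diagonal,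
`B(zⁿ⁺¹, zⁿ⁺¹) = B(l₋₁ zⁿ, zⁿ⁺¹) = B(zⁿ, l₁ zⁿ⁺¹) = (n+1)(n+2h) B(zⁿ, zⁿ)`, which is the
recursion satisfied by `n!·(2h)(2h+1)⋯(2h+n−1)`.
-/

theorem sesq_eq_zero_of_eigenvalue_ne {V : Type*} [AddCommGroup V] [Module ℂ V]
    (B : V → V → ℂ)
    (hsmul1 : ∀ (c : ℂ) (p q : V), B (c • p) q = (starRingEnd ℂ) c * B p q)
    (hsmul2 : ∀ (c : ℂ) (p q : V), B p (c • q) = c * B p q)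
    (T : V → V) (hT : ∀ p q, B (T p) q = B p (T q))
    {u v : V} {a b : ℝ} (hu : T u = (a : ℂ) • u) (hv : T v = (b : ℂ) • v) (hab : a ≠ b) :
    B u v = 0 := by
  have hsymm : ((a : ℂ) - b) * B u v = 0 := by
    have hTuv := hT u v
    rw [hu, hv, hsmul1, hsmul2, Complex.conj_ofReal] at hTuv
    linear_combination hTuv
  exact (mul_eq_zero.mp hsymm).resolve_left (sub_ne_zero.mpr (mod_cast hab))

theorem X_mul_derivative_X_pow {R : Type*} [CommSemiring R] (k : ℕ) :
    (X : R[X]) * derivative (X ^ k) = (k : R) • X ^ k := by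
  cases k with
  | zero => simp
  | succ k =>
    rw [derivative_X_pow, Nat.add_sub_cancel, smul_eq_C_mul]
    ring

theorem lgen_neg_one_apply (h : ℝ) (p : ℂ[X]) : lgen h (-1) p = X * p := rfl

theorem lgen_zero_X_pow (h : ℝ) (k : ℕ) :
    lgen h 0 ((X : ℂ[X]) ^ k) = (((k : ℝ) + h : ℝ) : ℂ) • (X : ℂ[X]) ^ k := by
  change (X : ℂ[X]) * derivative (X ^ k) + (h : ℂ) • X ^ k = _
  rw [X_mul_derivative_X_pow, ← add_smul]
  push_cast
  rfl

theorem lgen_one_X_pow_succ (h : ℝ) (k : ℕ) :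
    lgen h 1 ((X : ℂ[X]) ^ (k + 1)) = (((k : ℂ) + 1) * ((k : ℂ) + 2 * h)) • (X : ℂ[X]) ^ k := by
  change (X : ℂ[X]) * derivative (derivative (X ^ (k + 1)))
      + ((2 * h : ℝ) : ℂ) • derivative (X ^ (k + 1)) = _
  rw [derivative_X_pow, Nat.add_sub_cancel, ← smul_eq_C_mul, derivative_smul, mul_smul_comm,
    X_mul_derivative_X_pow]
  push_cast
  module

theorem wgt_succ (h : ℝ) (k : ℕ) :
    wgt h (k + 1) = ((k : ℝ) + 1) * ((k : ℝ) + 2 * h) * wgt h k := by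
  simp only [wgt, Nat.factorial_succ, Finset.prod_range_succ]
  push_cast
  ring

theorem stmt17_general (h : ℝ) (B : Polynomial ℂ → Polynomial ℂ → ℂ)
    (hsmul1 : ∀ (c : ℂ) (p q : Polynomial ℂ), B (c • p) q = (starRingEnd ℂ) c * B p q)
    (hsmul2 : ∀ (c : ℂ) (p q : Polynomial ℂ), B p (c • q) = c * B p q)
    (hcontra : ∀ i ∈ ({-1, 0, 1} : Set ℤ), ∀ p q : Polynomial ℂ,
      B ((lgen h i) p) q = B p ((lgen h (-i)) q)) :
    ∀ n m : ℕ,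
      (n ≠ m → B ((X : Polynomial ℂ) ^ n) ((X : Polynomial ℂ) ^ m) = 0) ∧
      B ((X : Polynomial ℂ) ^ n) ((X : Polynomial ℂ) ^ n)
        = ((wgt h n : ℝ) : ℂ) * B 1 1 := by
  have hdiag : ∀ n : ℕ, B (X ^ n) (X ^ n) = ((wgt h n : ℝ) : ℂ) * B 1 1 := by
    intro n
    induction n with
    | zero => simp [wgt]
    | succ k ih =>
      have hstep := hcontra (-1) (by simp) (X ^ k) (X ^ (k + 1))
      rw [lgen_neg_one_apply, ← pow_succ', neg_neg, lgen_one_X_pow_succ, hsmul2, ih] at hstep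
      rw [hstep, wgt_succ]
      push_cast
      ring
  intro n m
  refine ⟨fun hnm => ?_, hdiag n⟩
  refine sesq_eq_zero_of_eigenvalue_ne B hsmul1 hsmul2 (lgen h 0) (hcontra 0 (by simp))
    (lgen_zero_X_pow h n) (lgen_zero_X_pow h m) ?_
  simpa using hnm

/-- Any contravariant sesquilinear form `B` on the Verma module `V_h`
satisfies `B(zⁿ, zᵐ) = 0` for `n ≠ m` and `B(zⁿ, zⁿ) = n!·(2h)⋯(2h+n−1)·B(1,1)`; in
particular it is unique up to a scalar multiple. -/
theorem stmt17 (h : ℝ) (B : Polynomial ℂ → Polynomial ℂ → ℂ)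
    (hadd1 : ∀ p p' q : Polynomial ℂ, B (p + p') q = B p q + B p' q)
    (hadd2 : ∀ p q q' : Polynomial ℂ, B p (q + q') = B p q + B p q')
    (hsmul1 : ∀ (c : ℂ) (p q : Polynomial ℂ), B (c • p) q = (starRingEnd ℂ) c * B p q)
    (hsmul2 : ∀ (c : ℂ) (p q : Polynomial ℂ), B p (c • q) = c * B p q)
    (hcontra : ∀ i ∈ ({-1, 0, 1} : Set ℤ), ∀ p q : Polynomial ℂ,
      B ((lgen h i) p) q = B p ((lgen h (-i)) q)) :
    ∀ n m : ℕ,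
      (n ≠ m → B ((X : Polynomial ℂ) ^ n) ((X : Polynomial ℂ) ^ m) = 0) ∧
      B ((X : Polynomial ℂ) ^ n) ((X : Polynomial ℂ) ^ n)
        = ((wgt h n : ℝ) : ℂ) * B 1 1 :=
  stmt17_general h B hsmul1 hsmul2 hcontra
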